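/- Fix 1/2 < p ≤ 1 and k ∈ ℕ. The k×k symmetric matrix H_k with diagonal entries H_k(i,i) = 4(2p−1)/p and off-diagonal entries H_k(i,j) = −(2(2p−1)²/p²)·((1−p)/p)^{|i−j|−1} for i ≠ j is positive definite, and its determinant equals det(H_k) = (k(2p−1)+1)·2^k·(2p−1)^k / p^{2k}. -/

import Mathlib

open MeasureTheory Filter Finset Matrix
open scoped ENNReal
noncomputable section

/-- The matrix `H_k` : diagonal entries `4(2p−1)/p` and off-diagonal entries
`−(2(2p−1)²/p²)·((1−p)/p)^{|i−j|−1}`. -/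
def Hmat (p : ℝ) (k : ℕ) : Matrix (Fin k) (Fin k) ℝ := fun i j =>
  if i = j then 4 * (2 * p - 1) / p
  else -(2 * (2 * p - 1) ^ 2 / p ^ 2) * ((1 - p) / p) ^ (((i : ℤ) - (j : ℤ)).natAbs - 1)

/-- Column coefficient of the Cholesky-type factor. -/
def cL (p : ℝ) (j : ℕ) : ℝ :=
  (2 * p - 1) * ((2 * p - 1) * j + p) / (p * ((2 * p - 1) * (j + 1) + 1))

/-- Diagonal entries of the `LDLᵀ` factorization. -/
def dd (p : ℝ) (j : ℕ) : ℝ :=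
  2 * (2 * p - 1) / p ^ 2 * ((2 * p - 1) * (j + 1) + 1) / ((2 * p - 1) * j + 1)

/-- Entries of the unit lower-triangular factor. -/
def Lent (p : ℝ) (i j : ℕ) : ℝ :=
  if i = j then 1 else if j < i then -(((1 - p) / p) ^ (i - j - 1) * cL p j) else 0

/-- The unit lower-triangular factor as a matrix. -/
def Lmat (p : ℝ) (k : ℕ) : Matrix (Fin k) (Fin k) ℝ := fun i j => Lent p (i : ℕ) (j : ℕ)

lemma key_sum (p : ℝ) (hp : 1 / 2 < p) (hp1 : p ≤ 1) (i : ℕ) :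
    ∑ m ∈ Finset.range i, ((1 - p) / p) ^ (2 * (i - m - 1)) * (cL p m) ^ 2 * dd p m
      = 2 * (2 * p - 1) ^ 3 / p ^ 2 * i / ((2 * p - 1) * i + 1) := by
  have hp0 : (0:ℝ) < p := by linarith
  have hs : (0:ℝ) < 2 * p - 1 := by linarith
  induction i with
  | zero => simp
  | succ i ih =>
    rw [Finset.sum_range_succ]
    have h1 : ∑ m ∈ Finset.range i,
        ((1 - p) / p) ^ (2 * (i + 1 - m - 1)) * (cL p m) ^ 2 * dd p m
        = ((1 - p) / p) ^ 2 *
          ∑ m ∈ Finset.range i, ((1 - p) / p) ^ (2 * (i - m - 1)) * (cL p m) ^ 2 * dd p m := by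
      rw [Finset.mul_sum]
      refine Finset.sum_congr rfl fun m hm => ?_
      have hmi : m < i := Finset.mem_range.mp hm
      rw [show 2 * (i + 1 - m - 1) = 2 + 2 * (i - m - 1) by omega, pow_add]
      ring
    rw [h1, ih]
    have hd1 : ((2 * p - 1) * (i:ℝ) + 1) ≠ 0 := by
      have := mul_nonneg hs.le (Nat.cast_nonneg (α := ℝ) i); linarith
    have hd2 : ((2 * p - 1) * ((i:ℝ) + 1) + 1) ≠ 0 := by
      have := mul_nonneg hs.le (by positivity : (0:ℝ) ≤ (i:ℝ) + 1); linarith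
    have hns : (2 * p - 1 : ℝ) ≠ 0 := ne_of_gt hs
    rw [show 2 * (i + 1 - i - 1) = 0 by omega, pow_zero]
    simp only [cL, dd]
    push_cast
    have hd1' : (p * 2 - 1) * (i:ℝ) + 1 ≠ 0 := by rw [mul_comm p 2]; exact hd1
    have hd2' : (p * 2 - 1) * ((i:ℝ) + 1) + 1 ≠ 0 := by rw [mul_comm p 2]; exact hd2
    field_simp
    ring

lemma hmat_symm (p : ℝ) (k : ℕ) (i j : Fin k) : Hmat p k i j = Hmat p k j i := by
  unfold Hmat
  rcases eq_or_ne i j with h | h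
  · rw [h]
  · have hn : ((i:ℤ) - (j:ℤ)).natAbs = ((j:ℤ) - (i:ℤ)).natAbs := by omega
    rw [if_neg h, if_neg (Ne.symm h), hn]

lemma entry_le (p : ℝ) (hp : 1 / 2 < p) (hp1 : p ≤ 1) (k : ℕ) (i j : Fin k)
    (hij : (i : ℕ) ≤ (j : ℕ)) :
    ∑ m : Fin k, Lent p (i : ℕ) (m : ℕ) * dd p (m : ℕ) * Lent p (j : ℕ) (m : ℕ)
      = Hmat p k i j := by
  have hp0 : (0:ℝ) < p := by linarith
  have hs : (0:ℝ) < 2 * p - 1 := by linarith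
  have hns : (2 * p - 1 : ℝ) ≠ 0 := ne_of_gt hs
  have hd1 : ((2 * p - 1) * (i:ℝ) + 1) ≠ 0 := by
    have := mul_nonneg hs.le (Nat.cast_nonneg (α := ℝ) (i:ℕ)); linarith
  have hd2 : ((2 * p - 1) * ((i:ℝ) + 1) + 1) ≠ 0 := by
    have := mul_nonneg hs.le (by positivity : (0:ℝ) ≤ (i:ℝ) + 1); linarith
  rw [Fin.sum_univ_eq_sum_range (fun m => Lent p (i : ℕ) m * dd p m * Lent p (j : ℕ) m) k]
  rw [← Finset.sum_subset (Finset.range_subset_range.mpr (show (i:ℕ)+1 ≤ k from i.isLt))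
      (fun x _ hx => by
        have hix : (i:ℕ) < x := by simpa using hx
        simp [Lent, Nat.ne_of_lt hix, Nat.lt_asymm hix])]
  rw [Finset.sum_range_succ]
  have hsum : ∑ m ∈ Finset.range (i:ℕ),
      Lent p (i:ℕ) m * dd p m * Lent p (j:ℕ) m
      = ((1 - p) / p) ^ ((j:ℕ) - (i:ℕ)) *
        ∑ m ∈ Finset.range (i:ℕ),
          ((1 - p) / p) ^ (2 * ((i:ℕ) - m - 1)) * (cL p m) ^ 2 * dd p m := by
    rw [Finset.mul_sum]
    refine Finset.sum_congr rfl fun m hm => ?_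
    have hmi : m < (i:ℕ) := Finset.mem_range.mp hm
    rw [Lent, if_neg (by omega), if_pos (by omega),
        Lent, if_neg (by omega), if_pos (by omega)]
    rw [show (j:ℕ) - m - 1 = ((j:ℕ) - (i:ℕ)) + ((i:ℕ) - m - 1) by omega, pow_add,
        show 2 * ((i:ℕ) - m - 1) = ((i:ℕ) - m - 1) + ((i:ℕ) - m - 1) by omega, pow_add]
    ring
  rw [hsum, key_sum p hp hp1]
  have e1 : Lent p (i:ℕ) (i:ℕ) = 1 := by simp [Lent]
  rcases eq_or_lt_of_le hij with heq | hlt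
  · have hij' : i = j := Fin.ext heq
    subst hij'
    rw [e1, Nat.sub_self, pow_zero, Hmat, if_pos rfl, dd]
    field_simp
    ring
  · have hne : i ≠ j := fun h => by simp [h] at hlt
    have e2 : Lent p (j:ℕ) (i:ℕ) = -(((1 - p) / p) ^ ((j:ℕ) - (i:ℕ) - 1) * cL p (i:ℕ)) := by
      unfold Lent
      rw [if_neg (by omega : ¬((j:ℕ) = (i:ℕ))), if_pos hlt]
    have hnat : ((i : ℤ) - (j : ℤ)).natAbs - 1 = (j:ℕ) - (i:ℕ) - 1 := by omega
    have hpow : ((1 - p) / p) ^ ((j:ℕ) - (i:ℕ))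
        = ((1 - p) / p) ^ ((j:ℕ) - (i:ℕ) - 1) * ((1 - p) / p) := by
      rw [← pow_succ]; congr 1; omega
    rw [e1, e2, Hmat, if_neg hne, hnat, hpow, dd, cL]
    have hd1' : (p * 2 - 1) * ((i:ℕ):ℝ) + 1 ≠ 0 := by rw [mul_comm p 2]; exact hd1
    have hd2' : (p * 2 - 1) * (((i:ℕ):ℝ) + 1) + 1 ≠ 0 := by rw [mul_comm p 2]; exact hd2
    field_simp
    ring

lemma hmat_eq_LDL (p : ℝ) (hp : 1 / 2 < p) (hp1 : p ≤ 1) (k : ℕ) :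
    Hmat p k = Lmat p k * Matrix.diagonal (fun m : Fin k => dd p (m : ℕ)) * (Lmat p k)ᵀ := by
  ext i j
  rw [Matrix.mul_apply]
  have hterm : ∀ m : Fin k,
      (Lmat p k * Matrix.diagonal (fun m : Fin k => dd p (m : ℕ))) i m * (Lmat p k)ᵀ m j
      = Lent p (i:ℕ) (m:ℕ) * dd p (m:ℕ) * Lent p (j:ℕ) (m:ℕ) := by
    intro m
    rw [Matrix.mul_diagonal, Matrix.transpose_apply]
    rfl
  simp only [hterm]
  rcases le_total (i:ℕ) (j:ℕ) with h | h
  · exact (entry_le p hp hp1 k i j h).symm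
  · rw [hmat_symm p k i j, ← entry_le p hp hp1 k j i h]
    exact Finset.sum_congr rfl fun m _ => by ring

lemma lmat_det (p : ℝ) (k : ℕ) : (Lmat p k).det = 1 := by
  have h : (Lmat p k).BlockTriangular OrderDual.toDual := by
    intro i j hij
    have : (j:ℕ) > (i:ℕ) := hij
    simp [Lmat, Lent, Nat.ne_of_lt this, Nat.lt_asymm this]
  rw [Matrix.det_of_lowerTriangular _ h]
  have : ∀ i : Fin k, Lmat p k i i = 1 := fun i => by simp [Lmat, Lent]
  simp [this]

lemma dd_prod (p : ℝ) (hp : 1 / 2 < p) (hp1 : p ≤ 1) (k : ℕ) :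
    ∏ m ∈ Finset.range k, dd p m
      = ((k : ℝ) * (2 * p - 1) + 1) * 2 ^ k * (2 * p - 1) ^ k / p ^ (2 * k) := by
  have hp0 : (0:ℝ) < p := by linarith
  have hs : (0:ℝ) < 2 * p - 1 := by linarith
  induction k with
  | zero => simp
  | succ k ih =>
    rw [Finset.prod_range_succ, ih]
    have hd1 : ((2 * p - 1) * (k:ℝ) + 1) ≠ 0 := by
      have := mul_nonneg hs.le (Nat.cast_nonneg (α := ℝ) k); linarith
    rw [dd]
    push_cast
    rw [show 2 * (k + 1) = 2 * k + 2 by ring]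
    field_simp
    ring

/-- `H_k` is positive definite and `det H_k = (k(2p−1)+1)·2^k·(2p−1)^k / p^{2k}`. -/
theorem Hmat_posDef_and_det (p : ℝ) (hp : 1 / 2 < p) (hp1 : p ≤ 1) (k : ℕ) :
    (Hmat p k).PosDef ∧
      (Hmat p k).det = ((k : ℝ) * (2 * p - 1) + 1) * 2 ^ k * (2 * p - 1) ^ k / p ^ (2 * k) := by
  have hp0 : (0:ℝ) < p := by linarith
  have hs : (0:ℝ) < 2 * p - 1 := by linarith
  have hdd : ∀ m : ℕ, 0 < dd p m := by
    intro m
    have h1 : (0:ℝ) < (2 * p - 1) * ((m:ℝ) + 1) + 1 := by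
      have := mul_nonneg hs.le (by positivity : (0:ℝ) ≤ (m:ℝ) + 1); linarith
    have h2 : (0:ℝ) < (2 * p - 1) * (m:ℝ) + 1 := by
      have := mul_nonneg hs.le (Nat.cast_nonneg (α := ℝ) m); linarith
    rw [dd]
    positivity
  have hfac := hmat_eq_LDL p hp hp1 k
  have hLunit : IsUnit (Lmat p k) := by
    rw [Matrix.isUnit_iff_isUnit_det, lmat_det]
    exact isUnit_one
  constructor
  · rw [Matrix.posDef_iff_dotProduct_mulVec]
    constructor
    · -- Hermitian
      ext i j
      simp only [Matrix.conjTranspose_apply, star_trivial]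
      exact hmat_symm p k j i
    · intro x hx
      have hy : (Lmat p k)ᵀ *ᵥ x ≠ 0 := by
        intro h
        apply hx
        have hinj : Function.Injective ((Lmat p k)ᵀ).mulVec := by
          rw [Matrix.mulVec_injective_iff_isUnit, Matrix.isUnit_iff_isUnit_det,
            Matrix.det_transpose, lmat_det]
          exact isUnit_one
        have h0 : (Lmat p k)ᵀ *ᵥ x = (Lmat p k)ᵀ *ᵥ 0 := by
          rw [h, Matrix.mulVec_zero]
        exact hinj h0
      have hD : (Matrix.diagonal (fun m : Fin k => dd p (m : ℕ))).PosDef :=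
        Matrix.PosDef.diagonal fun m => hdd (m : ℕ)
      have hrw : star x ⬝ᵥ (Hmat p k *ᵥ x)
          = star ((Lmat p k)ᵀ *ᵥ x) ⬝ᵥ
            (Matrix.diagonal (fun m : Fin k => dd p (m : ℕ)) *ᵥ ((Lmat p k)ᵀ *ᵥ x)) := by
        rw [hfac, Matrix.mul_assoc, ← Matrix.mulVec_mulVec, ← Matrix.mulVec_mulVec,
          Matrix.dotProduct_mulVec, Matrix.mulVec_transpose]
        simp [star_trivial]
      rw [hrw]
      exact hD.dotProduct_mulVec_pos hy
  · rw [hfac, Matrix.det_mul, Matrix.det_mul, Matrix.det_transpose, lmat_det,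
      Matrix.det_diagonal, one_mul, mul_one,
      Fin.prod_univ_eq_prod_range (fun m => dd p m) k]
    exact dd_prod p hp hp1 k
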